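/- arXiv:1508.00713 — 5 statements merged into one kernel-verified Lean document; each statement's English description precedes it below -/
import Mathlib

section
/- If λ > cT(1+T), then for fixed X in H and t in [0,T] the cost functional J_{X,t} is strictly convex; more precisely, for all controls v₁(.), v₂(.) in L²(t,T;H) and all θ ∈ [0,1], J_{X,t}(θv₁(.)+(1−θ)v₂(.)) ≤ θ J_{X,t}(v₁(.)) + (1−θ) J_{X,t}(v₂(.)) − (θ(1−θ)/2)(λ − cT(1+T)) ∫_t^T ||v₁(s)−v₂(s)||² ds. -/
/-!
A `c`-Lipschitz gradient makes `F + (c/2)‖·‖²` convex (its gradient is monotone), so `F` and `F_T`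
exceed their convex combination along the states by at most `(c/2) θ(1-θ) ‖Y₁(s) - Y₂(s)‖²`.
By Cauchy–Schwarz `‖Y₁(s) - Y₂(s)‖² ≤ (s - t) ∫_t^T ‖v₁ - v₂‖²`, so the running and terminal costs
together lose at most `(c/2) θ(1-θ) ((T-t)²/2 + (T-t)) ∫_t^T ‖v₁ - v₂‖²`, and
`(T-t)²/2 + (T-t) ≤ T(1+T)`. The kinetic term gains exactly `(λ/2) θ(1-θ) ∫_t^T ‖v₁ - v₂‖²`
by the parallelogram identity.
-/

open MeasureTheory Set
open scoped RealInnerProductSpace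

variable {H : Type*} [NormedAddCommGroup H] [InnerProductSpace ℝ H] [CompleteSpace H]

/-- The state `X(s) = X + ∫_t^s v(σ) dσ` associated to the control `v`. -/
noncomputable def state (X : H) (t : ℝ) (v : ℝ → H) (s : ℝ) : H :=
  X + ∫ σ in t..s, v σ

/-- A control belongs to `L²(t,T;H)`. -/
def Admissible (t T : ℝ) (v : ℝ → H) : Prop :=
  IntervalIntegrable v volume t T ∧ IntervalIntegrable (fun s => ‖v s‖ ^ 2) volume t T

/-- The cost functional `J_{X,t}(v)`. -/
noncomputable def cost (F FT : H → ℝ) (lam : ℝ) (X : H) (t T : ℝ) (v : ℝ → H) : ℝ :=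
  lam / 2 * (∫ s in t..T, ‖v s‖ ^ 2) + (∫ s in t..T, F (state X t v s)) + FT (state X t v T)

/-- The value function `V(X,t) = inf_v J_{X,t}(v)`. -/
noncomputable def valueFn (F FT : H → ℝ) (lam T : ℝ) (X : H) (t : ℝ) : ℝ :=
  sInf ((fun v => cost F FT lam X t T v) '' {v : ℝ → H | Admissible t T v})

/-- The adjoint state `Z(s) = D F_T(Y(T)) + ∫_s^T D F(Y(σ)) dσ` associated to a path `Y`. -/
noncomputable def adjZ (DF DFT : H → H) (T : ℝ) (Y : ℝ → H) (s : ℝ) : H :=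
  DFT (Y T) + ∫ σ in s..T, DF (Y σ)

/-- `Y` solves the two-point boundary value problem
`dY/ds = -(1/λ) Z(s)`, `-dZ/ds = D F(Y(s))`, `Y(t) = X`, `Z(T) = D F_T(Y(T))`,
where `Z = adjZ DF DFT T Y` encodes the two last conditions. -/
def IsOptimalPath (DF DFT : H → H) (lam T : ℝ) (X : H) (t : ℝ) (Y : ℝ → H) : Prop :=
  ContinuousOn Y (Icc t T) ∧ Y t = X ∧
    ∀ s ∈ Icc t T, HasDerivWithinAt Y (-(1 / lam) • adjZ DF DFT T Y s) (Icc t T) s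

section

variable {E : Type*} [NormedAddCommGroup E] {t T : ℝ} {v v₁ v₂ : ℝ → E}

lemma Admissible.memLp (hv : Admissible t T v) : MemLp v 2 (volume.restrict (uIoc t T)) :=
  (memLp_two_iff_integrable_sq_norm (intervalIntegrable_iff.1 hv.1).aestronglyMeasurable).2
    (intervalIntegrable_iff.1 hv.2)

lemma Admissible.intervalIntegrable_norm_sub_sq (h₁ : Admissible t T v₁)
    (h₂ : Admissible t T v₂) :
    IntervalIntegrable (fun s => ‖v₁ s - v₂ s‖ ^ 2) volume t T :=
  intervalIntegrable_iff.2 <| (memLp_two_iff_integrable_sq_norm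
    (h₁.memLp.sub h₂.memLp).aestronglyMeasurable).1 (h₁.memLp.sub h₂.memLp)

theorem norm_intervalIntegral_sq_le [NormedSpace ℝ E] {w : ℝ → E} {a b : ℝ} (hab : a ≤ b)
    (hw : IntervalIntegrable w volume a b)
    (hw2 : IntervalIntegrable (fun σ => ‖w σ‖ ^ 2) volume a b) :
    ‖∫ σ in a..b, w σ‖ ^ 2 ≤ (b - a) * ∫ σ in a..b, ‖w σ‖ ^ 2 := by
  set A := ∫ σ in a..b, ‖w σ‖
  set B := ∫ σ in a..b, ‖w σ‖ ^ 2
  have hquad : ∀ r : ℝ, 0 ≤ (b - a) * (r * r) + (-2 * A) * r + B := by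
    intro r
    have hexpand : ∫ σ in a..b, (‖w σ‖ - r) ^ 2 = (b - a) * (r * r) + (-2 * A) * r + B := by
      simp_rw [sub_sq]
      rw [intervalIntegral.integral_add (hw2.sub ((hw.norm.const_mul 2).mul_const r))
          intervalIntegrable_const, intervalIntegral.integral_sub hw2
          ((hw.norm.const_mul 2).mul_const r), intervalIntegral.integral_mul_const,
        intervalIntegral.integral_const_mul, intervalIntegral.integral_const, smul_eq_mul]
      ring
    rw [← hexpand]
    exact intervalIntegral.integral_nonneg hab fun σ _ => sq_nonneg _
  have hdiscr := discrim_le_zero hquad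
  have hA : ‖∫ σ in a..b, w σ‖ ≤ A := intervalIntegral.norm_integral_le_integral_norm hab
  unfold discrim at hdiscr
  nlinarith [norm_nonneg (∫ σ in a..b, w σ)]

variable [InnerProductSpace ℝ E]

lemma norm_smul_add_one_sub_smul_sq (θ : ℝ) (a b : E) :
    ‖θ • a + (1 - θ) • b‖ ^ 2
      = θ * ‖a‖ ^ 2 + (1 - θ) * ‖b‖ ^ 2 - θ * (1 - θ) * ‖a - b‖ ^ 2 := by
  rw [norm_add_sq_real, norm_sub_sq_real, norm_smul, norm_smul, real_inner_smul_left,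
    real_inner_smul_right, mul_pow, mul_pow, Real.norm_eq_abs, Real.norm_eq_abs, sq_abs, sq_abs]
  ring

lemma intervalIntegral.integral_norm_smul_add_one_sub_smul_sq {μ : Measure ℝ} {a b : ℝ}
    {v₁ v₂ : ℝ → E} (θ : ℝ)
    (h₁ : IntervalIntegrable (fun s => ‖v₁ s‖ ^ 2) μ a b)
    (h₂ : IntervalIntegrable (fun s => ‖v₂ s‖ ^ 2) μ a b)
    (h₁₂ : IntervalIntegrable (fun s => ‖v₁ s - v₂ s‖ ^ 2) μ a b) :
    ∫ s in a..b, ‖θ • v₁ s + (1 - θ) • v₂ s‖ ^ 2 ∂μ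
      = θ * (∫ s in a..b, ‖v₁ s‖ ^ 2 ∂μ) + (1 - θ) * (∫ s in a..b, ‖v₂ s‖ ^ 2 ∂μ)
        - θ * (1 - θ) * ∫ s in a..b, ‖v₁ s - v₂ s‖ ^ 2 ∂μ := by
  simp_rw [norm_smul_add_one_sub_smul_sq]
  rw [intervalIntegral.integral_sub ((h₁.const_mul θ).add (h₂.const_mul (1 - θ)))
      (h₁₂.const_mul _), intervalIntegral.integral_add (h₁.const_mul θ) (h₂.const_mul (1 - θ)),
    intervalIntegral.integral_const_mul, intervalIntegral.integral_const_mul,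
    intervalIntegral.integral_const_mul]

theorem convexOn_univ_of_hasGradientAt_of_monotone [CompleteSpace E] {ψ : E → ℝ} {G : E → E}
    (hψ : ∀ x, HasGradientAt ψ (G x) x) (hG : ∀ x y, 0 ≤ ⟪G x - G y, x - y⟫) :
    ConvexOn ℝ univ ψ := by
  refine ⟨convex_univ, fun x _ y _ a b ha hb hab => ?_⟩
  obtain rfl : b = 1 - a := by linarith
  set γ : ℝ → E := fun τ => y + τ • (x - y)
  have hγ : ∀ τ, HasDerivAt γ (x - y) τ := fun τ => by
    simpa [γ] using ((hasDerivAt_id τ).smul_const (x - y)).const_add y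
  have hφ : ∀ τ, HasDerivAt (ψ ∘ γ) ⟪G (γ τ), x - y⟫ τ := fun τ => by
    simpa using (hasGradientAt_iff_hasFDerivAt.1 (hψ (γ τ))).comp_hasDerivAt τ (hγ τ)
  have hmono : Monotone (deriv (ψ ∘ γ)) := by
    intro τ₁ τ₂ h
    rw [(hφ τ₁).deriv, (hφ τ₂).deriv, ← sub_nonneg, ← inner_sub_left]
    rcases h.eq_or_lt with rfl | h
    · simp
    · have hγ₂₁ : γ τ₂ - γ τ₁ = (τ₂ - τ₁) • (x - y) := by simp only [γ]; module
      have := hG (γ τ₂) (γ τ₁)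
      rw [hγ₂₁, real_inner_smul_right] at this
      exact nonneg_of_mul_nonneg_right (by linarith) (sub_pos.2 h)
  have := (hmono.convexOn_univ_of_deriv fun τ => (hφ τ).differentiableAt).2
    (mem_univ 1) (mem_univ 0) ha hb (by ring)
  have hline : a • x + (1 - a) • y = γ a := by simp only [γ]; module
  simpa [hline, γ] using this

theorem strongConvexOn_univ_neg_of_lipschitz_gradient [CompleteSpace E] {f : E → ℝ} {g : E → E}
    {c : ℝ}
    (hf : ∀ x, HasGradientAt f (g x) x) (hg : ∀ x y, ‖g x - g y‖ ≤ c * ‖x - y‖) :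
    StrongConvexOn univ (-c) f := by
  rw [strongConvexOn_iff_convex]
  refine convexOn_univ_of_hasGradientAt_of_monotone (G := fun x => g x + c • x)
    (fun x => ?_) fun x y => ?_
  · rw [hasGradientAt_iff_hasFDerivAt]
    refine ((hasGradientAt_iff_hasFDerivAt.1 (hf x)).sub
      (((hasFDerivAt_id x).norm_sq).const_mul (-c / 2))).congr_fderiv ?_
    ext z
    simp only [id_eq, ContinuousLinearMap.comp_id, sub_apply,
      InnerProductSpace.toDual_apply_apply, smul_apply, innerSL_apply_apply, nsmul_eq_mul,
      Nat.cast_ofNat, smul_eq_mul, map_add, map_smul, add_apply]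
    ring
  · have hinner : -(‖g x - g y‖ * ‖x - y‖) ≤ ⟪g x - g y, x - y⟫ :=
      neg_le_of_abs_le (abs_real_inner_le_norm _ _)
    have hsplit : ⟪g x + c • x - (g y + c • y), x - y⟫
        = ⟪g x - g y, x - y⟫ + c * ‖x - y‖ ^ 2 := by
      rw [show g x + c • x - (g y + c • y) = (g x - g y) + c • (x - y) by module,
        inner_add_left, real_inner_smul_left, real_inner_self_eq_norm_sq]
    rw [hsplit]
    nlinarith [mul_le_mul_of_nonneg_right (hg x y) (norm_nonneg (x - y))]

section State

variable {X : E}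

lemma continuousOn_state (htT : t ≤ T) (hv : IntervalIntegrable v volume t T) :
    ContinuousOn (state X t v) (Icc t T) := by
  have := intervalIntegral.continuousOn_primitive_interval (a := t) (b := T)
    (by rw [uIcc_of_le htT]; exact (intervalIntegrable_iff_integrableOn_Icc_of_le htT).1 hv)
  rw [uIcc_of_le htT] at this
  exact continuousOn_const.add this

lemma state_smul_add_one_sub_smul (θ : ℝ) {s : ℝ} (h₁ : IntervalIntegrable v₁ volume t s)
    (h₂ : IntervalIntegrable v₂ volume t s) :
    state X t (fun σ => θ • v₁ σ + (1 - θ) • v₂ σ) s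
      = θ • state X t v₁ s + (1 - θ) • state X t v₂ s := by
  simp only [state]
  have h₁' : IntervalIntegrable (fun σ => θ • v₁ σ) volume t s := h₁.smul θ
  have h₂' : IntervalIntegrable (fun σ => (1 - θ) • v₂ σ) volume t s := h₂.smul (1 - θ)
  rw [intervalIntegral.integral_add h₁' h₂',
    intervalIntegral.integral_smul, intervalIntegral.integral_smul]
  module

lemma norm_state_sub_sq_le {s : ℝ} (hts : t ≤ s) (h₁ : IntervalIntegrable v₁ volume t s)
    (h₂ : IntervalIntegrable v₂ volume t s)
    (h₁₂ : IntervalIntegrable (fun σ => ‖v₁ σ - v₂ σ‖ ^ 2) volume t s) :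
    ‖state X t v₁ s - state X t v₂ s‖ ^ 2 ≤ (s - t) * ∫ σ in t..s, ‖v₁ σ - v₂ σ‖ ^ 2 := by
  have hdiff : state X t v₁ s - state X t v₂ s = ∫ σ in t..s, (v₁ σ - v₂ σ) := by
    simp only [state]
    rw [intervalIntegral.integral_sub h₁ h₂]
    abel
  rw [hdiff]
  exact norm_intervalIntegral_sq_le hts (h₁.sub h₂) h₁₂

variable {f : E → ℝ} {c θ : ℝ}

lemma StrongConvexOn.comp_state_le (hf : StrongConvexOn univ (-c) f) (hc : 0 ≤ c)
    (hθ : θ ∈ Icc (0 : ℝ) 1) (h₁ : IntervalIntegrable v₁ volume t T)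
    (h₂ : IntervalIntegrable v₂ volume t T)
    (h₁₂ : IntervalIntegrable (fun σ => ‖v₁ σ - v₂ σ‖ ^ 2) volume t T) {s : ℝ}
    (hs : s ∈ Icc t T) :
    f (state X t (fun σ => θ • v₁ σ + (1 - θ) • v₂ σ) s)
      ≤ θ * f (state X t v₁ s) + (1 - θ) * f (state X t v₂ s)
        + c / 2 * (θ * (1 - θ)) * (∫ σ in t..T, ‖v₁ σ - v₂ σ‖ ^ 2) * (s - t) := by
  have hsub : uIcc t s ⊆ uIcc t T := uIcc_subset_uIcc left_mem_uIcc (Icc_subset_uIcc hs)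
  rw [state_smul_add_one_sub_smul θ (h₁.mono_set hsub) (h₂.mono_set hsub)]
  have hconv := hf.2 (mem_univ (state X t v₁ s)) (mem_univ (state X t v₂ s)) hθ.1
    (sub_nonneg.2 hθ.2) (add_sub_cancel θ 1)
  have hdist := norm_state_sub_sq_le (X := X) hs.1 (h₁.mono_set hsub) (h₂.mono_set hsub)
    (h₁₂.mono_set hsub)
  have hmono : ∫ σ in t..s, ‖v₁ σ - v₂ σ‖ ^ 2 ≤ ∫ σ in t..T, ‖v₁ σ - v₂ σ‖ ^ 2 :=
    intervalIntegral.integral_mono_interval le_rfl hs.1 hs.2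
      (ae_of_all _ fun _ => sq_nonneg _) h₁₂
  have hK : 0 ≤ c / 2 * (θ * (1 - θ)) :=
    mul_nonneg (div_nonneg hc zero_le_two) (mul_nonneg hθ.1 (sub_nonneg.2 hθ.2))
  simp only [smul_eq_mul] at hconv
  linarith [mul_le_mul_of_nonneg_left (hdist.trans
    (mul_le_mul_of_nonneg_left hmono (sub_nonneg.2 hs.1))) hK]

lemma StrongConvexOn.integral_comp_state_le (hf : StrongConvexOn univ (-c) f)
    (hfc : Continuous f) (hc : 0 ≤ c) (hθ : θ ∈ Icc (0 : ℝ) 1) (htT : t ≤ T)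
    (h₁ : IntervalIntegrable v₁ volume t T) (h₂ : IntervalIntegrable v₂ volume t T)
    (h₁₂ : IntervalIntegrable (fun σ => ‖v₁ σ - v₂ σ‖ ^ 2) volume t T) :
    ∫ s in t..T, f (state X t (fun σ => θ • v₁ σ + (1 - θ) • v₂ σ) s)
      ≤ θ * (∫ s in t..T, f (state X t v₁ s)) + (1 - θ) * (∫ s in t..T, f (state X t v₂ s))
        + c / 2 * (θ * (1 - θ)) * (∫ σ in t..T, ‖v₁ σ - v₂ σ‖ ^ 2) * ((T - t) ^ 2 / 2) := by
  have hint : ∀ {v : ℝ → E}, IntervalIntegrable v volume t T →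
      IntervalIntegrable (fun s => f (state X t v s)) volume t T := fun hv =>
    (hfc.comp_continuousOn (continuousOn_state htT hv)).intervalIntegrable_of_Icc htT
  have hint₁ := (hint h₁).const_mul θ
  have hint₂ := (hint h₂).const_mul (1 - θ)
  have hlin : IntervalIntegrable (fun s => s - t) volume t T :=
    intervalIntegral.intervalIntegrable_id.sub intervalIntegrable_const
  calc ∫ s in t..T, f (state X t (fun σ => θ • v₁ σ + (1 - θ) • v₂ σ) s)
      ≤ ∫ s in t..T, (θ * f (state X t v₁ s) + (1 - θ) * f (state X t v₂ s)
          + c / 2 * (θ * (1 - θ)) * (∫ σ in t..T, ‖v₁ σ - v₂ σ‖ ^ 2) * (s - t)) :=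
        intervalIntegral.integral_mono_on htT (hint ((h₁.smul θ).add (h₂.smul (1 - θ))))
          ((hint₁.add hint₂).add (hlin.const_mul _))
          fun s hs => hf.comp_state_le hc hθ h₁ h₂ h₁₂ hs
    _ = _ := by
        rw [intervalIntegral.integral_add (hint₁.add hint₂) (hlin.const_mul _),
          intervalIntegral.integral_add hint₁ hint₂, intervalIntegral.integral_const_mul,
          intervalIntegral.integral_const_mul, intervalIntegral.integral_const_mul,
          intervalIntegral.integral_comp_sub_right (fun s => s), integral_id]
        ring

end State

end

theorem statement1_general
    (F FT : H → ℝ) (DF DFT : H → H) (c T lam : ℝ)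
    (hF : ∀ X, HasGradientAt F (DF X) X) (hFT : ∀ X, HasGradientAt FT (DFT X) X)
    (hDF : ∀ X₁ X₂ : H, ‖DF X₁ - DF X₂‖ ≤ c * ‖X₁ - X₂‖)
    (hDFT : ∀ X₁ X₂ : H, ‖DFT X₁ - DFT X₂‖ ≤ c * ‖X₁ - X₂‖)
    (hDF0 : ‖DF 0‖ ≤ c)
    (t : ℝ) (ht : t ∈ Icc 0 T) (X : H)
    (v₁ v₂ : ℝ → H) (hv₁ : Admissible t T v₁) (hv₂ : Admissible t T v₂)
    (θ : ℝ) (hθ : θ ∈ Icc (0 : ℝ) 1) :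
    cost F FT lam X t T (fun s => θ • v₁ s + (1 - θ) • v₂ s) ≤
      θ * cost F FT lam X t T v₁ + (1 - θ) * cost F FT lam X t T v₂ -
        θ * (1 - θ) / 2 * (lam - c * T * (1 + T)) * ∫ s in t..T, ‖v₁ s - v₂ s‖ ^ 2 := by
  obtain ⟨ht0, htT⟩ := ht
  have hc : 0 ≤ c := (norm_nonneg _).trans hDF0
  have h₁₂ := hv₁.intervalIntegrable_norm_sub_sq hv₂
  have hkinetic :=
    intervalIntegral.integral_norm_smul_add_one_sub_smul_sq θ hv₁.2 hv₂.2 h₁₂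
  have hrunning := (strongConvexOn_univ_neg_of_lipschitz_gradient hF hDF).integral_comp_state_le
    (X := X) (continuous_iff_continuousAt.2 fun x => (hF x).differentiableAt.continuousAt)
    hc hθ htT hv₁.1 hv₂.1 h₁₂
  have hterminal := (strongConvexOn_univ_neg_of_lipschitz_gradient hFT hDFT).comp_state_le
    (X := X) hc hθ hv₁.1 hv₂.1 h₁₂ (right_mem_Icc.2 htT)
  have hK : 0 ≤ c / 2 * (θ * (1 - θ)) * ∫ s in t..T, ‖v₁ s - v₂ s‖ ^ 2 :=
    mul_nonneg (mul_nonneg (div_nonneg hc zero_le_two) (mul_nonneg hθ.1 (sub_nonneg.2 hθ.2)))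
      (intervalIntegral.integral_nonneg htT fun s _ => sq_nonneg _)
  have htime : (T - t) ^ 2 / 2 + (T - t) ≤ T * (1 + T) := by nlinarith
  unfold cost
  rw [hkinetic]
  linarith [mul_le_mul_of_nonneg_left htime hK]

/-- strict convexity of the cost functional when `λ > cT(1+T)`. -/
theorem statement1
    (F FT : H → ℝ) (DF DFT : H → H) (c T lam : ℝ)
    (hF : ∀ X, HasGradientAt F (DF X) X) (hFT : ∀ X, HasGradientAt FT (DFT X) X)
    (hDF : ∀ X₁ X₂ : H, ‖DF X₁ - DF X₂‖ ≤ c * ‖X₁ - X₂‖)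
    (hDFT : ∀ X₁ X₂ : H, ‖DFT X₁ - DFT X₂‖ ≤ c * ‖X₁ - X₂‖)
    (hDF0 : ‖DF 0‖ ≤ c) (hDFT0 : ‖DFT 0‖ ≤ c)
    (hT : 0 < T) (hlam : 0 < lam)
    (hlc : c * T * (1 + T) < lam)
    (t : ℝ) (ht : t ∈ Icc 0 T) (X : H)
    (v₁ v₂ : ℝ → H) (hv₁ : Admissible t T v₁) (hv₂ : Admissible t T v₂)
    (θ : ℝ) (hθ : θ ∈ Icc (0 : ℝ) 1) :
    cost F FT lam X t T (fun s => θ • v₁ s + (1 - θ) • v₂ s) ≤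
      θ * cost F FT lam X t T v₁ + (1 - θ) * cost F FT lam X t T v₂ -
        θ * (1 - θ) / 2 * (lam - c * T * (1 + T)) * ∫ s in t..T, ‖v₁ s - v₂ s‖ ^ 2 :=
  statement1_general F FT DF DFT c T lam hF hFT hDF hDFT hDF0 t ht X v₁ v₂ hv₁ hv₂ θ hθ
end

section
/- Assume λ > cT(1+T) and let (Y(.), Z(.)) be the unique solution of the two-point boundary value problem dY/ds = −Z(s)/λ, −dZ/ds = D F(Y(s)), Y(t) = X, Z(T) = D F_T(Y(T)), with optimal control u(s) = −Z(s)/λ. Then sup_{t≤s≤T} ||Y(s)|| ≤ (λ||X|| + cT(T+1)) / (λ − cT(T+1)), sup_{t≤s≤T} ||Z(s)|| ≤ λ(1+T)c(1+||X||) / (λ − cT(T+1)), and sup_{t≤s≤T} ||u(s)|| ≤ (1+T)c(1+||X||) / (λ − cT(T+1)). -/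
/-!
Let `M` be the maximum of `‖Y‖` on `[t, T]`. The affine growth `‖D F(y)‖ ≤ c (‖y‖ + 1)` bounds
the adjoint state by `c (M + 1) (1 + T)`, hence the speed `‖Y'‖ = ‖Z‖ / λ`, and integrating over
an interval of length at most `T` gives `λ M ≤ λ ‖X‖ + c T (1 + T) (M + 1)`. Since
`c T (1 + T) < λ` this self-referential inequality can be solved for `M`, and the bounds on `Z`
and `u` follow.
-/

open MeasureTheory Set
open scoped RealInnerProductSpace

variable {H : Type*} [NormedAddCommGroup H] [InnerProductSpace ℝ H] [CompleteSpace H]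

lemma norm_le_mul_norm_add_one {E F : Type*} [SeminormedAddCommGroup E]
    [SeminormedAddCommGroup F] {f : E → F} {c : ℝ}
    (hf : ∀ x y, ‖f x - f y‖ ≤ c * ‖x - y‖) (hf0 : ‖f 0‖ ≤ c) (x : E) :
    ‖f x‖ ≤ c * (‖x‖ + 1) :=
  calc ‖f x‖ ≤ ‖f x - f 0‖ + ‖f 0‖ := norm_le_norm_sub_add _ _
    _ ≤ c * ‖x - 0‖ + c := add_le_add (hf x 0) hf0
    _ = c * (‖x‖ + 1) := by rw [sub_zero, mul_add, mul_one]

lemma le_div_of_mul_le_add_mul_add_one {lam A x M : ℝ} (hA : A < lam)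
    (h : lam * M ≤ lam * x + A * (M + 1)) : M ≤ (lam * x + A) / (lam - A) := by
  rw [le_div_iff₀ (sub_pos.2 hA)]
  linarith

lemma add_one_le_div_of_mul_le_add_mul_add_one {lam A x M : ℝ} (hA : A < lam)
    (h : lam * M ≤ lam * x + A * (M + 1)) : M + 1 ≤ lam * (1 + x) / (lam - A) := by
  rw [le_div_iff₀ (sub_pos.2 hA)]
  linarith

lemma norm_neg_one_div_smul {E : Type*} [SeminormedAddCommGroup E] [NormedSpace ℝ E]
    (lam : ℝ) (z : E) : ‖-(1 / lam) • z‖ = ‖z‖ / |lam| := by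
  rw [norm_smul, norm_neg, norm_div, norm_one, Real.norm_eq_abs, one_div_mul_eq_div]

lemma norm_adjZ_le {E : Type*} [NormedAddCommGroup E] [InnerProductSpace ℝ E]
    {DF DFT : E → E} {T K s : ℝ} {Y : ℝ → E} (hs : s ≤ T)
    (hDF : ∀ σ ∈ Ioc s T, ‖DF (Y σ)‖ ≤ K) (hDFT : ‖DFT (Y T)‖ ≤ K) :
    ‖adjZ DF DFT T Y s‖ ≤ K * (1 + (T - s)) := by
  have hint : ‖∫ σ in s..T, DF (Y σ)‖ ≤ K * |T - s| :=
    intervalIntegral.norm_integral_le_of_norm_le_const fun σ hσ ↦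
      hDF σ (by rwa [uIoc_of_le hs] at hσ)
  rw [abs_of_nonneg (sub_nonneg.2 hs)] at hint
  calc ‖adjZ DF DFT T Y s‖ ≤ ‖DFT (Y T)‖ + ‖∫ σ in s..T, DF (Y σ)‖ := norm_add_le _ _
    _ ≤ K * (1 + (T - s)) := by linarith

lemma norm_adjZ_le_of_forall_norm_le {E : Type*} [NormedAddCommGroup E] [InnerProductSpace ℝ E]
    {DF DFT : E → E} {c T M t : ℝ} {Y : ℝ → E}
    (hDF : ∀ X₁ X₂ : E, ‖DF X₁ - DF X₂‖ ≤ c * ‖X₁ - X₂‖)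
    (hDFT : ∀ X₁ X₂ : E, ‖DFT X₁ - DFT X₂‖ ≤ c * ‖X₁ - X₂‖)
    (hDF0 : ‖DF 0‖ ≤ c) (hDFT0 : ‖DFT 0‖ ≤ c) (ht : 0 ≤ t)
    (hM : ∀ σ ∈ Icc t T, ‖Y σ‖ ≤ M) :
    ∀ s ∈ Icc t T, ‖adjZ DF DFT T Y s‖ ≤ c * (M + 1) * (1 + T) := by
  intro s hs
  have hc : 0 ≤ c := (norm_nonneg _).trans hDF0
  have hgrowth {G : E → E} (hG : ∀ X₁ X₂ : E, ‖G X₁ - G X₂‖ ≤ c * ‖X₁ - X₂‖)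
      (hG0 : ‖G 0‖ ≤ c) {σ : ℝ} (hσ : σ ∈ Icc t T) : ‖G (Y σ)‖ ≤ c * (M + 1) :=
    (norm_le_mul_norm_add_one hG hG0 _).trans (by gcongr; exact hM σ hσ)
  calc ‖adjZ DF DFT T Y s‖ ≤ c * (M + 1) * (1 + (T - s)) :=
        norm_adjZ_le hs.2 (fun σ hσ ↦ hgrowth hDF hDF0 ⟨hs.1.trans hσ.1.le, hσ.2⟩)
          (hgrowth hDFT hDFT0 ⟨hs.1.trans hs.2, le_rfl⟩)
    _ ≤ c * (M + 1) * (1 + T) := by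
        have : 0 ≤ M + 1 := by linarith [(norm_nonneg _).trans (hM s hs)]
        gcongr
        linarith [hs.1]

lemma IsOptimalPath.mul_norm_sub_le {E : Type*} [NormedAddCommGroup E] [InnerProductSpace ℝ E]
    {DF DFT : E → E} {lam T t B s : ℝ} {X : E} {Y : ℝ → E}
    (hY : IsOptimalPath DF DFT lam T X t Y) (hlam : 0 < lam)
    (hB : ∀ σ ∈ Icc t T, ‖adjZ DF DFT T Y σ‖ ≤ B) (hs : s ∈ Icc t T) :
    lam * ‖Y s - X‖ ≤ B * (s - t) := by
  obtain ⟨-, rfl, hderiv⟩ := hY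
  have hspeed : ∀ σ ∈ Icc t T, ‖-(1 / lam) • adjZ DF DFT T Y σ‖ ≤ B / lam := fun σ hσ ↦ by
    rw [norm_neg_one_div_smul, abs_of_pos hlam]
    exact div_le_div_of_nonneg_right (hB σ hσ) hlam.le
  have hmvt := (convex_Icc t T).norm_image_sub_le_of_norm_hasDerivWithin_le hderiv hspeed
    ⟨le_rfl, hs.1.trans hs.2⟩ hs
  rw [Real.norm_of_nonneg (sub_nonneg.2 hs.1)] at hmvt
  calc lam * ‖Y s - Y t‖ ≤ lam * (B / lam * (s - t)) := by gcongr
    _ = B * (s - t) := by field_simp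

theorem statement5_general
    (DF DFT : H → H) (c T lam : ℝ)
    (hDF : ∀ X₁ X₂ : H, ‖DF X₁ - DF X₂‖ ≤ c * ‖X₁ - X₂‖)
    (hDFT : ∀ X₁ X₂ : H, ‖DFT X₁ - DFT X₂‖ ≤ c * ‖X₁ - X₂‖)
    (hDF0 : ‖DF 0‖ ≤ c) (hDFT0 : ‖DFT 0‖ ≤ c)
    (hlc : c * T * (1 + T) < lam)
    (X : H) (t : ℝ) (ht : t ∈ Icc 0 T)
    (Y : ℝ → H) (hY : IsOptimalPath DF DFT lam T X t Y) :
    ∀ s ∈ Icc t T,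
      ‖Y s‖ ≤ (lam * ‖X‖ + c * T * (T + 1)) / (lam - c * T * (T + 1)) ∧
      ‖adjZ DF DFT T Y s‖ ≤ lam * (1 + T) * c * (1 + ‖X‖) / (lam - c * T * (T + 1)) ∧
      ‖-(1 / lam) • adjZ DF DFT T Y s‖ ≤ (1 + T) * c * (1 + ‖X‖) / (lam - c * T * (T + 1)) := by
  intro s hs
  rw [add_comm T 1]
  have hT : 0 ≤ T := ht.1.trans ht.2
  have hc : 0 ≤ c := (norm_nonneg _).trans hDF0
  have hlam : 0 < lam := lt_of_le_of_lt (by positivity) hlc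
  obtain ⟨s₀, hs₀, hmax⟩ := isCompact_Icc.exists_isMaxOn ⟨s, hs⟩
    (continuous_norm.comp_continuousOn hY.1)
  set M := ‖Y s₀‖
  have hZ := norm_adjZ_le_of_forall_norm_le (Y := Y) (M := M) hDF hDFT hDF0 hDFT0 ht.1
    fun σ hσ ↦ hmax hσ
  have hMX : lam * M ≤ lam * ‖X‖ + c * T * (1 + T) * (M + 1) :=
    calc lam * M ≤ lam * ‖X‖ + lam * ‖Y s₀ - X‖ := by
          rw [← mul_add]; gcongr; exact norm_le_norm_add_norm_sub' _ _
      _ ≤ lam * ‖X‖ + c * (M + 1) * (1 + T) * (s₀ - t) :=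
          add_le_add_right (hY.mul_norm_sub_le hlam hZ hs₀) _
      _ ≤ lam * ‖X‖ + c * (M + 1) * (1 + T) * T := by gcongr; linarith [hs₀.2, ht.1]
      _ = lam * ‖X‖ + c * T * (1 + T) * (M + 1) := by ring
  have hZs : ‖adjZ DF DFT T Y s‖ ≤ lam * (1 + T) * c * (1 + ‖X‖) / (lam - c * T * (1 + T)) :=
    calc ‖adjZ DF DFT T Y s‖ ≤ (1 + T) * c * (M + 1) := by linarith [hZ s hs]
      _ ≤ (1 + T) * c * (lam * (1 + ‖X‖) / (lam - c * T * (1 + T))) := by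
          gcongr; exact add_one_le_div_of_mul_le_add_mul_add_one hlc hMX
      _ = lam * (1 + T) * c * (1 + ‖X‖) / (lam - c * T * (1 + T)) := by ring
  refine ⟨(hmax hs).trans (le_div_of_mul_le_add_mul_add_one hlc hMX), hZs, ?_⟩
  rw [norm_neg_one_div_smul, abs_of_pos hlam, div_le_iff₀ hlam]
  exact hZs.trans_eq (by ring)

/-- a priori bounds on the optimal trajectory `Y`, the adjoint state `Z` and
the optimal control `u = -(1/λ) Z`. -/
theorem statement5
    (F FT : H → ℝ) (DF DFT : H → H) (c T lam : ℝ)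
    (hF : ∀ X, HasGradientAt F (DF X) X) (hFT : ∀ X, HasGradientAt FT (DFT X) X)
    (hDF : ∀ X₁ X₂ : H, ‖DF X₁ - DF X₂‖ ≤ c * ‖X₁ - X₂‖)
    (hDFT : ∀ X₁ X₂ : H, ‖DFT X₁ - DFT X₂‖ ≤ c * ‖X₁ - X₂‖)
    (hDF0 : ‖DF 0‖ ≤ c) (hDFT0 : ‖DFT 0‖ ≤ c)
    (hT : 0 < T) (hlam : 0 < lam)
    (hlc : c * T * (1 + T) < lam)
    (X : H) (t : ℝ) (ht : t ∈ Icc 0 T)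
    (Y : ℝ → H) (hY : IsOptimalPath DF DFT lam T X t Y) :
    ∀ s ∈ Icc t T,
      ‖Y s‖ ≤ (lam * ‖X‖ + c * T * (T + 1)) / (lam - c * T * (T + 1)) ∧
      ‖adjZ DF DFT T Y s‖ ≤ lam * (1 + T) * c * (1 + ‖X‖) / (lam - c * T * (T + 1)) ∧
      ‖-(1 / lam) • adjZ DF DFT T Y s‖ ≤ (1 + T) * c * (1 + ‖X‖) / (lam - c * T * (T + 1)) :=
  statement5_general DF DFT c T lam hDF hDFT hDF0 hDFT0 hlc X t ht Y hY
end

section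
/- Assume λ > cT(1+T). Then there exists a constant C (depending only on c, T, λ) such that the value function satisfies |V(X,t)| ≤ C(1+||X||²) for all X in H and t in [0,T]. -/
/-!
The zero control gives `V(X,t) ≤ (T - t) F(X) + F_T(X)`, and a functional whose gradient is
`c`-Lipschitz with `‖D F(0)‖ ≤ c` satisfies `|F Y| ≤ |F 0| + c ‖Y‖ + (c/2) ‖Y‖²`.
For the lower bound, put `ρ = ∫_t^T ‖v‖`: then `‖X(s)‖ ≤ ‖X‖ + ρ` and, by Cauchy–Schwarz,
`ρ² ≤ T ∫_t^T ‖v‖²`, so the cost is at least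
`λ/(2T) ρ² - (T + 1) (|F 0| + |F_T 0| + c (‖X‖ + ρ) + (c/2) (‖X‖ + ρ)²)`.
When `λ > c T (1 + T)` the coefficient of `ρ²` stays positive, and completing the square in `ρ`
leaves a lower bound `-C (1 + ‖X‖²)`.
-/

open MeasureTheory Set
open scoped RealInnerProductSpace

variable {H : Type*} [NormedAddCommGroup H] [InnerProductSpace ℝ H] [CompleteSpace H]

theorem norm_sub_le_of_norm_fderiv_le_affine {E G : Type*} [NormedAddCommGroup E]
    [NormedSpace ℝ E] [NormedAddCommGroup G] [NormedSpace ℝ G] {f : E → G} {f' : E → E →L[ℝ] G}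
    {a b : ℝ} (hf : ∀ x, HasFDerivAt f (f' x) x) (hf' : ∀ x, ‖f' x‖ ≤ a + b * ‖x‖) (y : E) :
    ‖f y - f 0‖ ≤ a * ‖y‖ + b / 2 * ‖y‖ ^ 2 := by
  have hline : ∀ s : ℝ, HasDerivAt (fun s : ℝ => f (s • y) - f 0) (f' (s • y) y) s := fun s => by
    simpa using ((hf (s • y)).comp_hasDerivAt s ((hasDerivAt_id s).smul_const y)).sub_const (f 0)
  have hquad : ∀ s : ℝ, HasDerivAt (fun s : ℝ => a * ‖y‖ * s + b / 2 * ‖y‖ ^ 2 * s ^ 2)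
      (a * ‖y‖ + b * ‖y‖ ^ 2 * s) s := fun s => by
    have := ((hasDerivAt_id s).const_mul (a * ‖y‖)).add
      ((hasDerivAt_pow 2 s).const_mul (b / 2 * ‖y‖ ^ 2))
    refine this.congr_deriv ?_
    norm_num
    ring
  have hline_le : ∀ s ∈ Ico (0 : ℝ) 1, ‖f' (s • y) y‖ ≤ a * ‖y‖ + b * ‖y‖ ^ 2 * s := by
    rintro s ⟨hs, -⟩
    calc ‖f' (s • y) y‖ ≤ (a + b * ‖s • y‖) * ‖y‖ := (f' _).le_of_opNorm_le (hf' _) y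
      _ = _ := by rw [norm_smul, Real.norm_of_nonneg hs]; ring
  simpa using image_norm_le_of_norm_deriv_right_le_deriv_boundary
    (fun s _ => (hline s).continuousAt.continuousWithinAt) (fun s _ => (hline s).hasDerivWithinAt)
    (by simp) hquad hline_le (right_mem_Icc.2 zero_le_one)

theorem abs_le_of_lipschitz_gradient {F : H → ℝ} {DF : H → H} {c : ℝ}
    (hF : ∀ X, HasGradientAt F (DF X) X)
    (hDF : ∀ X₁ X₂ : H, ‖DF X₁ - DF X₂‖ ≤ c * ‖X₁ - X₂‖) (hDF0 : ‖DF 0‖ ≤ c) (Y : H) :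
    |F Y| ≤ |F 0| + c * ‖Y‖ + c / 2 * ‖Y‖ ^ 2 := by
  have hgrowth : ∀ X, ‖InnerProductSpace.toDual ℝ H (DF X)‖ ≤ c + c * ‖X‖ := fun X => by
    rw [LinearIsometryEquiv.norm_map]
    have := norm_le_norm_add_norm_sub' (DF X) (DF 0)
    have := hDF X 0
    rw [sub_zero] at this
    linarith
  have := norm_sub_le_of_norm_fderiv_le_affine (fun X => (hF X).hasFDerivAt) hgrowth Y
  rw [Real.norm_eq_abs] at this
  linarith [abs_sub_abs_le_abs_sub (F Y) (F 0)]

theorem sq_intervalIntegral_norm_le {E : Type*} [NormedAddCommGroup E] {a b : ℝ} (hab : a ≤ b)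
    {v : ℝ → E} (hv : IntervalIntegrable v volume a b)
    (hv2 : IntervalIntegrable (fun s => ‖v s‖ ^ 2) volume a b) :
    (∫ s in a..b, ‖v s‖) ^ 2 ≤ (b - a) * ∫ s in a..b, ‖v s‖ ^ 2 := by
  rw [intervalIntegral.integral_of_le hab, intervalIntegral.integral_of_le hab]
  have hv2' : MemLp v (ENNReal.ofReal 2) (volume.restrict (Ioc a b)) := by
    rw [ENNReal.ofReal_ofNat, memLp_two_iff_integrable_sq_norm hv.1.aestronglyMeasurable]
    exact hv2.1
  have : IsFiniteMeasure (volume.restrict (Ioc a b)) := by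
    rw [isFiniteMeasure_restrict]; exact measure_Ioc_lt_top.ne
  have hholder := integral_mul_le_Lp_mul_Lq_of_nonneg Real.HolderConjugate.two_two
    (Filter.Eventually.of_forall fun s => norm_nonneg (v s))
    (Filter.Eventually.of_forall fun _ => zero_le_one) hv2'.norm (memLp_const (1 : ℝ))
  have hE : 0 ≤ ∫ s in Ioc a b, ‖v s‖ ^ 2 := integral_nonneg fun s => by positivity
  calc (∫ s in Ioc a b, ‖v s‖) ^ 2
      ≤ (√(∫ s in Ioc a b, ‖v s‖ ^ 2) * √(b - a)) ^ 2 := by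
        refine pow_le_pow_left₀ (integral_nonneg fun s => norm_nonneg _) ?_ 2
        simpa [Real.sqrt_eq_rpow, hab] using hholder
    _ = (b - a) * ∫ s in Ioc a b, ‖v s‖ ^ 2 := by
        rw [mul_pow, Real.sq_sqrt hE, Real.sq_sqrt (sub_nonneg.2 hab), mul_comm]

section ControlProblem

variable {E : Type*} [NormedAddCommGroup E]

theorem admissible_zero (t T : ℝ) : Admissible t T (0 : ℝ → E) :=
  ⟨intervalIntegrable_const, by simp⟩

variable [InnerProductSpace ℝ E]

theorem cost_zero (F FT : E → ℝ) (lam : ℝ) (X : E) (t T : ℝ) :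
    cost F FT lam X t T 0 = (T - t) * F X + FT X := by
  simp [cost, state]

theorem norm_state_le {X : E} {t T s : ℝ} {v : ℝ → E} (hv : IntervalIntegrable v volume t T)
    (hts : t ≤ s) (hsT : s ≤ T) : ‖state X t v s‖ ≤ ‖X‖ + ∫ σ in t..T, ‖v σ‖ := by
  calc ‖X + ∫ σ in t..s, v σ‖ ≤ ‖X‖ + ∫ σ in t..s, ‖v σ‖ := by
        grw [norm_add_le, intervalIntegral.norm_integral_le_integral_norm hts]
    _ ≤ ‖X‖ + ∫ σ in t..T, ‖v σ‖ := by
        gcongr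
        exact intervalIntegral.integral_mono_interval le_rfl hts hsT
          (Filter.Eventually.of_forall fun σ => norm_nonneg _) hv.norm

theorem sub_le_cost {F FT : E → ℝ} {B c : ℝ} (hc : 0 ≤ c)
    (hF : ∀ Y, |F Y| ≤ B + c * ‖Y‖ + c / 2 * ‖Y‖ ^ 2)
    (hFT : ∀ Y, |FT Y| ≤ B + c * ‖Y‖ + c / 2 * ‖Y‖ ^ 2) (lam : ℝ) (X : E) {t T : ℝ} (htT : t ≤ T)
    {v : ℝ → E} (hv : IntervalIntegrable v volume t T) :
    lam / 2 * (∫ s in t..T, ‖v s‖ ^ 2) - (T - t + 1) * (B + c * (‖X‖ + ∫ s in t..T, ‖v s‖)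
      + c / 2 * (‖X‖ + ∫ s in t..T, ‖v s‖) ^ 2) ≤ cost F FT lam X t T v := by
  set ρ := ‖X‖ + ∫ s in t..T, ‖v s‖
  have hbound : ∀ {G : E → ℝ}, (∀ Y, |G Y| ≤ B + c * ‖Y‖ + c / 2 * ‖Y‖ ^ 2) →
      ∀ s ∈ Icc t T, |G (state X t v s)| ≤ B + c * ρ + c / 2 * ρ ^ 2 := by
    rintro G hG s ⟨hts, hsT⟩
    grw [hG, norm_state_le hv hts hsT]
  have hint : ‖∫ s in t..T, F (state X t v s)‖ ≤ (B + c * ρ + c / 2 * ρ ^ 2) * |T - t| :=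
    intervalIntegral.norm_integral_le_of_norm_le_const fun s hs =>
      hbound hF s (Ioc_subset_Icc_self (uIoc_of_le htT ▸ hs))
  rw [Real.norm_eq_abs, abs_of_nonneg (sub_nonneg.2 htT)] at hint
  have hend := hbound hFT T ⟨htT, le_rfl⟩
  unfold cost
  linarith [neg_abs_le (∫ s in t..T, F (state X t v s)), neg_abs_le (FT (state X t v T))]

noncomputable def valueBoundConst (c T lam B : ℝ) : ℝ :=
  c ^ 2 * (T + 1) ^ 2 * T / (lam - c * T * (1 + T)) + (T + 1) * (B + c)

/-- Complete the square in `ρ`: its coefficient `lam / (2 * T) - c * (T + 1) / 2` is positive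
exactly when `c * T * (1 + T) < lam`. -/
theorem neg_valueBoundConst_mul_le {c T lam B : ℝ} (hc : 0 ≤ c) (hT : 0 < T) (hB : 0 ≤ B)
    (hlc : c * T * (1 + T) < lam) (a ρ : ℝ) :
    -(valueBoundConst c T lam B * (1 + a ^ 2))
      ≤ lam / (2 * T) * ρ ^ 2 - (T + 1) * (B + c * (a + ρ) + c / 2 * (a + ρ) ^ 2) := by
  set D := lam - c * T * (1 + T) with hD_def
  have hD : 0 < D := sub_pos.2 hlc
  have hsos : lam / (2 * T) * ρ ^ 2 - (T + 1) * (B + c * (a + ρ) + c / 2 * (a + ρ) ^ 2)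
      + valueBoundConst c T lam B * (1 + a ^ 2)
      = ((D * ρ - c * T * (T + 1) * (1 + a)) ^ 2 + c ^ 2 * T ^ 2 * (T + 1) ^ 2 * (a - 1) ^ 2
          + 2 * T * D * (T + 1) * B * a ^ 2 + T * D * (T + 1) * c * ((a - 1) ^ 2 + 1))
        / (2 * T * D) := by
    rw [valueBoundConst, ← hD_def, show lam = D + c * T * (1 + T) by rw [hD_def]; ring]
    field_simp
    ring
  rw [← sub_nonneg, sub_neg_eq_add, hsos]
  positivity

theorem neg_le_cost {F FT : E → ℝ} {B c T lam : ℝ} (hc : 0 ≤ c) (hB : 0 ≤ B) (hT : 0 < T)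
    (hlc : c * T * (1 + T) < lam)
    (hF : ∀ Y, |F Y| ≤ B + c * ‖Y‖ + c / 2 * ‖Y‖ ^ 2)
    (hFT : ∀ Y, |FT Y| ≤ B + c * ‖Y‖ + c / 2 * ‖Y‖ ^ 2) (X : E) {t : ℝ} (ht : t ∈ Icc 0 T)
    {v : ℝ → E} (hv : Admissible t T v) :
    -(valueBoundConst c T lam B * (1 + ‖X‖ ^ 2)) ≤ cost F FT lam X t T v := by
  obtain ⟨ht0, htT⟩ := ht
  set ρ := ∫ s in t..T, ‖v s‖
  set e := ∫ s in t..T, ‖v s‖ ^ 2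
  have hρ : 0 ≤ ρ := intervalIntegral.integral_nonneg htT fun s _ => norm_nonneg _
  have he : 0 ≤ e := intervalIntegral.integral_nonneg htT fun s _ => by positivity
  have hlam : 0 ≤ lam := (lt_of_le_of_lt (by positivity) hlc).le
  have hρe : lam / (2 * T) * ρ ^ 2 ≤ lam / 2 * e := by
    have : ρ ^ 2 ≤ T * e := calc
      ρ ^ 2 ≤ (T - t) * e := sq_intervalIntegral_norm_le htT hv.1 hv.2
      _ ≤ T * e := by gcongr; linarith
    rw [div_mul_eq_mul_div, div_le_iff₀ (by positivity)]
    nlinarith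
  have hK : 0 ≤ B + c * (‖X‖ + ρ) + c / 2 * (‖X‖ + ρ) ^ 2 := by positivity
  nlinarith [sub_le_cost hc hF hFT lam X htT hv.1, neg_valueBoundConst_mul_le hc hT hB hlc ‖X‖ ρ]

theorem cost_zero_le {F FT : E → ℝ} {B c T lam : ℝ} (hc : 0 ≤ c) (hB : 0 ≤ B) (hT : 0 < T)
    (hlc : c * T * (1 + T) < lam)
    (hF : ∀ Y, |F Y| ≤ B + c * ‖Y‖ + c / 2 * ‖Y‖ ^ 2)
    (hFT : ∀ Y, |FT Y| ≤ B + c * ‖Y‖ + c / 2 * ‖Y‖ ^ 2) (X : E) {t : ℝ} (ht : t ∈ Icc 0 T) :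
    cost F FT lam X t T 0 ≤ valueBoundConst c T lam B * (1 + ‖X‖ ^ 2) := by
  obtain ⟨ht0, htT⟩ := ht
  have hK : 0 ≤ B + c * ‖X‖ + c / 2 * ‖X‖ ^ 2 := by positivity
  have hquad : B + c * ‖X‖ + c / 2 * ‖X‖ ^ 2 ≤ (B + c) * (1 + ‖X‖ ^ 2) := by
    nlinarith [mul_nonneg hc (sq_nonneg (‖X‖ - 1)), mul_nonneg hB (sq_nonneg ‖X‖)]
  have hfirst : 0 ≤ c ^ 2 * (T + 1) ^ 2 * T / (lam - c * T * (1 + T)) :=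
    div_nonneg (by positivity) (sub_pos.2 hlc).le
  calc cost F FT lam X t T 0 = (T - t) * F X + FT X := cost_zero F FT lam X t T
    _ ≤ (T - t) * |F X| + |FT X| :=
        add_le_add (mul_le_mul_of_nonneg_left (le_abs_self _) (by linarith)) (le_abs_self _)
    _ ≤ (T + 1) * (B + c * ‖X‖ + c / 2 * ‖X‖ ^ 2) := by
        grw [hF X, hFT X]
        nlinarith
    _ ≤ valueBoundConst c T lam B * (1 + ‖X‖ ^ 2) := by
        rw [valueBoundConst]
        nlinarith [mul_nonneg hfirst (by positivity : (0 : ℝ) ≤ 1 + ‖X‖ ^ 2)]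

theorem abs_valueFn_le {F FT : E → ℝ} {lam T : ℝ} {X : E} {t M : ℝ}
    (hlow : ∀ v, Admissible t T v → -M ≤ cost F FT lam X t T v)
    (hzero : cost F FT lam X t T 0 ≤ M) : |valueFn F FT lam T X t| ≤ M := by
  set S := (fun v => cost F FT lam X t T v) '' {v | Admissible t T v}
  have hzero_mem : cost F FT lam X t T 0 ∈ S := ⟨0, admissible_zero t T, rfl⟩
  have hlower : -M ∈ lowerBounds S := by
    rintro _ ⟨v, hv, rfl⟩
    exact hlow v hv
  exact abs_le.2 ⟨le_csInf ⟨_, hzero_mem⟩ hlower, (csInf_le ⟨_, hlower⟩ hzero_mem).trans hzero⟩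

end ControlProblem

theorem statement6_general
    (F FT : H → ℝ) (DF DFT : H → H) (c T lam : ℝ)
    (hF : ∀ X, HasGradientAt F (DF X) X) (hFT : ∀ X, HasGradientAt FT (DFT X) X)
    (hDF : ∀ X₁ X₂ : H, ‖DF X₁ - DF X₂‖ ≤ c * ‖X₁ - X₂‖)
    (hDFT : ∀ X₁ X₂ : H, ‖DFT X₁ - DFT X₂‖ ≤ c * ‖X₁ - X₂‖)
    (hDF0 : ‖DF 0‖ ≤ c) (hDFT0 : ‖DFT 0‖ ≤ c)
    (hT : 0 < T)
    (hlc : c * T * (1 + T) < lam) :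
    ∃ C : ℝ, ∀ X : H, ∀ t ∈ Icc 0 T, |valueFn F FT lam T X t| ≤ C * (1 + ‖X‖ ^ 2) := by
  have hc : 0 ≤ c := (norm_nonneg _).trans hDF0
  set B := |F 0| + |FT 0|
  have hB : 0 ≤ B := by positivity
  have hFq : ∀ Y, |F Y| ≤ B + c * ‖Y‖ + c / 2 * ‖Y‖ ^ 2 := fun Y => by
    linarith [abs_le_of_lipschitz_gradient hF hDF hDF0 Y, abs_nonneg (FT 0)]
  have hFTq : ∀ Y, |FT Y| ≤ B + c * ‖Y‖ + c / 2 * ‖Y‖ ^ 2 := fun Y => by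
    linarith [abs_le_of_lipschitz_gradient hFT hDFT hDFT0 Y, abs_nonneg (F 0)]
  exact ⟨valueBoundConst c T lam B, fun X t ht =>
    abs_valueFn_le (fun v hv => neg_le_cost hc hB hT hlc hFq hFTq X ht hv)
      (cost_zero_le hc hB hT hlc hFq hFTq X ht)⟩

/-- quadratic growth bound for the value function. -/
theorem statement6
    (F FT : H → ℝ) (DF DFT : H → H) (c T lam : ℝ)
    (hF : ∀ X, HasGradientAt F (DF X) X) (hFT : ∀ X, HasGradientAt FT (DFT X) X)
    (hDF : ∀ X₁ X₂ : H, ‖DF X₁ - DF X₂‖ ≤ c * ‖X₁ - X₂‖)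
    (hDFT : ∀ X₁ X₂ : H, ‖DFT X₁ - DFT X₂‖ ≤ c * ‖X₁ - X₂‖)
    (hDF0 : ‖DF 0‖ ≤ c) (hDFT0 : ‖DFT 0‖ ≤ c)
    (hT : 0 < T) (hlam : 0 < lam)
    (hlc : c * T * (1 + T) < lam) :
    ∃ C : ℝ, ∀ X : H, ∀ t ∈ Icc 0 T, |valueFn F FT lam T X t| ≤ C * (1 + ‖X‖ ^ 2) :=
  statement6_general F FT DF DFT c T lam hF hFT hDF hDFT hDF0 hDFT0 hT hlc
end

section
/- Assume λ > cT(1+T). For initial data (X₁,t₁) and (X₂,t₂) in H×[0,T], let Y_{X₁t₁}(.) and Y_{X₂t₂}(.) denote the corresponding optimal trajectories (the unique solutions of the two-point boundary value problem). Then sup over s in [max(t₁,t₂),T] of ||Y_{X₁t₁}(s) − Y_{X₂t₂}(s)|| is at most (λ/(λ−cT(T+1))) ( ||X₁−X₂|| + |t₂−t₁| (1+T) c (1 + max(||X₁||,||X₂||)) / (λ−cT(T+1)) ). In particular, for t₁ = t₂ = t, sup_{t≤s≤T} ||Y_{X₁t}(s) − Y_{X₂t}(s)|| ≤ λ ||X₁−X₂||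 / (λ−cT(T+1)). -/
/-! Both estimates come from one absorption argument: if `‖f'‖ ≤ α sup ‖f‖ + β` on an interval
of length at most `L` with `α L < 1`, the mean value theorem at a maximum point of `‖f‖` gives
`sup ‖f‖ ≤ (‖f a‖ + β L) / (1 - α L)`. Along an optimal path the speed is `‖Z‖ / λ`, and the
Lipschitz bounds give `‖Z‖ ≤ c (1 + T) (1 + sup ‖Y‖)` and `‖Z₁ - Z₂‖ ≤ c (1 + T) sup ‖Y₁ - Y₂‖`,
so `α = c (1 + T) / λ` and `L = T`. Applied to `Y` this bounds how far a path moves in time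
`s - t`; applied to `Y₁ - Y₂` from the later start `max t₁ t₂`, after moving `Y₁` from `t₁` to
`t₂`, it gives the stability estimate. -/

open MeasureTheory Set
open scoped RealInnerProductSpace

variable {H : Type*} [NormedAddCommGroup H] [InnerProductSpace ℝ H] [CompleteSpace H]

lemma norm_le_mul_one_add_norm {E F : Type*} [SeminormedAddCommGroup E]
    [SeminormedAddCommGroup F] {DG : E → F} {c : ℝ}
    (hDG : ∀ X₁ X₂ : E, ‖DG X₁ - DG X₂‖ ≤ c * ‖X₁ - X₂‖) (h0 : ‖DG 0‖ ≤ c) (u : E) :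
    ‖DG u‖ ≤ c * (1 + ‖u‖) := by
  have h := hDG u 0
  rw [sub_zero] at h
  linarith [norm_le_norm_add_norm_sub' (DG u) (DG 0)]

section NormedSpace

variable {E : Type*} [NormedAddCommGroup E] [NormedSpace ℝ E]

lemma norm_neg_one_div_smul_le {lam B : ℝ} {z : E} (hlam : 0 < lam) (hz : ‖z‖ ≤ B) :
    ‖-(1 / lam) • z‖ ≤ B / lam := by
  rw [norm_smul, norm_neg, Real.norm_of_nonneg (by positivity), one_div, inv_mul_eq_div]
  gcongr

lemma norm_le_of_norm_deriv_le_sup {f f' : ℝ → E} {a b α β L : ℝ}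
    (hf : ContinuousOn f (Icc a b))
    (hderiv : ∀ s ∈ Icc a b, HasDerivWithinAt f (f' s) (Icc a b) s)
    (hbound : ∀ M, (∀ σ ∈ Icc a b, ‖f σ‖ ≤ M) → ∀ s ∈ Icc a b, ‖f' s‖ ≤ α * M + β)
    (hL : b - a ≤ L) (hαL : 0 < 1 - α * L) :
    ∀ s ∈ Icc a b, ‖f s‖ ≤ (‖f a‖ + β * L) / (1 - α * L) := by
  intro s hs
  have ha : a ∈ Icc a b := left_mem_Icc.2 (hs.1.trans hs.2)
  obtain ⟨s₀, hs₀, hmax⟩ := isCompact_Icc.exists_isMaxOn ⟨a, ha⟩ hf.norm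
  set M := ‖f s₀‖
  have hM : ∀ σ ∈ Icc a b, ‖f σ‖ ≤ M := fun σ hσ => hmax hσ
  have hspeed_nonneg : 0 ≤ α * M + β := (norm_nonneg _).trans (hbound M hM a ha)
  have hmvt : ‖f s₀ - f a‖ ≤ (α * M + β) * ‖s₀ - a‖ :=
    (convex_Icc a b).norm_image_sub_le_of_norm_hasDerivWithin_le hderiv (hbound M hM) ha hs₀
  have hdist : ‖s₀ - a‖ ≤ L := by
    rw [Real.norm_of_nonneg (sub_nonneg.2 hs₀.1)]
    linarith [hs₀.2]
  have hM_le : M ≤ ‖f a‖ + (α * M + β) * L :=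
    calc M ≤ ‖f a‖ + ‖f s₀ - f a‖ := norm_le_norm_add_norm_sub' _ _
      _ ≤ ‖f a‖ + (α * M + β) * L := by
        gcongr
        exact hmvt.trans (mul_le_mul_of_nonneg_left hdist hspeed_nonneg)
  calc ‖f s‖ ≤ M := hM s hs
    _ ≤ (‖f a‖ + β * L) / (1 - α * L) := by
      rw [le_div_iff₀ hαL]
      linarith

lemma norm_integral_le_mul_of_le_on_Icc {g : ℝ → E} {t T K σ : ℝ} (ht : 0 ≤ t)
    (hσ : σ ∈ Icc t T) (hg : ∀ ρ ∈ Icc t T, ‖g ρ‖ ≤ K) :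
    ‖∫ ρ in σ..T, g ρ‖ ≤ K * T := by
  have hK : 0 ≤ K := (norm_nonneg _).trans (hg T ⟨hσ.1.trans hσ.2, le_rfl⟩)
  calc ‖∫ ρ in σ..T, g ρ‖ ≤ K * |T - σ| := by
        refine intervalIntegral.norm_integral_le_of_norm_le_const fun ρ hρ => hg ρ ?_
        rw [uIoc_of_le hσ.2] at hρ
        exact ⟨hσ.1.trans hρ.1.le, hρ.2⟩
    _ ≤ K * T := by
        gcongr
        rw [abs_of_nonneg (sub_nonneg.2 hσ.2)]
        linarith [hσ.1]

end NormedSpace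

section AdjointState

variable {E : Type*} [NormedAddCommGroup E] [InnerProductSpace ℝ E] {DF DFT : E → E} {c t T : ℝ}

lemma norm_adjZ_le_s7 (hDF : ∀ X₁ X₂ : E, ‖DF X₁ - DF X₂‖ ≤ c * ‖X₁ - X₂‖)
    (hDFT : ∀ X₁ X₂ : E, ‖DFT X₁ - DFT X₂‖ ≤ c * ‖X₁ - X₂‖)
    (hDF0 : ‖DF 0‖ ≤ c) (hDFT0 : ‖DFT 0‖ ≤ c) (ht : 0 ≤ t)
    {Y : ℝ → E} {N : ℝ} (hN : ∀ σ ∈ Icc t T, ‖Y σ‖ ≤ N) :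
    ∀ σ ∈ Icc t T, ‖adjZ DF DFT T Y σ‖ ≤ c * (1 + T) * (1 + N) := by
  intro σ hσ
  have hc : 0 ≤ c := (norm_nonneg _).trans hDF0
  have hgrad : ∀ {DG : E → E}, (∀ X₁ X₂ : E, ‖DG X₁ - DG X₂‖ ≤ c * ‖X₁ - X₂‖) →
      ‖DG 0‖ ≤ c → ∀ ρ ∈ Icc t T, ‖DG (Y ρ)‖ ≤ c * (1 + N) := fun hDG h0 ρ hρ =>
    (norm_le_mul_one_add_norm hDG h0 _).trans (by gcongr; exact hN ρ hρ)
  calc ‖adjZ DF DFT T Y σ‖ ≤ ‖DFT (Y T)‖ + ‖∫ ρ in σ..T, DF (Y ρ)‖ := norm_add_le _ _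
    _ ≤ c * (1 + N) + c * (1 + N) * T := by
        gcongr
        · exact hgrad hDFT hDFT0 T ⟨hσ.1.trans hσ.2, le_rfl⟩
        · exact norm_integral_le_mul_of_le_on_Icc ht hσ (hgrad hDF hDF0)
    _ = c * (1 + T) * (1 + N) := by ring

lemma norm_adjZ_sub_adjZ_le (hDF : ∀ X₁ X₂ : E, ‖DF X₁ - DF X₂‖ ≤ c * ‖X₁ - X₂‖)
    (hDFT : ∀ X₁ X₂ : E, ‖DFT X₁ - DFT X₂‖ ≤ c * ‖X₁ - X₂‖) (hc : 0 ≤ c) (ht : 0 ≤ t)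
    {Y₁ Y₂ : ℝ → E} (hY₁ : ContinuousOn Y₁ (Icc t T)) (hY₂ : ContinuousOn Y₂ (Icc t T))
    {M : ℝ} (hM : ∀ σ ∈ Icc t T, ‖Y₁ σ - Y₂ σ‖ ≤ M) :
    ∀ σ ∈ Icc t T, ‖adjZ DF DFT T Y₁ σ - adjZ DF DFT T Y₂ σ‖ ≤ c * (1 + T) * M := by
  intro σ hσ
  have hDF_cont : Continuous DF :=
    (LipschitzWith.of_dist_le' (by simpa only [dist_eq_norm] using hDF)).continuous
  have hsub : uIcc σ T ⊆ Icc t T := by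
    rw [uIcc_of_le hσ.2]
    exact Icc_subset_Icc hσ.1 le_rfl
  have hint : ∀ {Y : ℝ → E}, ContinuousOn Y (Icc t T) →
      IntervalIntegrable (fun ρ => DF (Y ρ)) volume σ T := fun hY =>
    (hDF_cont.comp_continuousOn (hY.mono hsub)).intervalIntegrable
  have hsplit : adjZ DF DFT T Y₁ σ - adjZ DF DFT T Y₂ σ
      = (DFT (Y₁ T) - DFT (Y₂ T)) + ∫ ρ in σ..T, (DF (Y₁ ρ) - DF (Y₂ ρ)) := by
    rw [intervalIntegral.integral_sub (hint hY₁) (hint hY₂), adjZ, adjZ]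
    abel
  have hlip : ∀ ρ ∈ Icc t T, ‖DF (Y₁ ρ) - DF (Y₂ ρ)‖ ≤ c * M := fun ρ hρ =>
    (hDF _ _).trans (by gcongr; exact hM ρ hρ)
  calc ‖adjZ DF DFT T Y₁ σ - adjZ DF DFT T Y₂ σ‖
      ≤ ‖DFT (Y₁ T) - DFT (Y₂ T)‖ + ‖∫ ρ in σ..T, (DF (Y₁ ρ) - DF (Y₂ ρ))‖ := by
        rw [hsplit]
        exact norm_add_le _ _
    _ ≤ c * M + c * M * T := by
        gcongr
        · exact (hDFT _ _).trans (by gcongr; exact hM T ⟨hσ.1.trans hσ.2, le_rfl⟩)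
        · exact norm_integral_le_mul_of_le_on_Icc ht hσ hlip
    _ = c * (1 + T) * M := by ring

end AdjointState

lemma one_sub_div_mul_eq {c T lam : ℝ} (hlam : lam ≠ 0) :
    1 - c * (1 + T) / lam * T = (lam - c * T * (T + 1)) / lam := by
  field_simp
  ring

lemma one_sub_div_mul_pos {c T lam : ℝ} (hlam : 0 < lam) (hlc : c * T * (1 + T) < lam) :
    0 < 1 - c * (1 + T) / lam * T := by
  rw [one_sub_div_mul_eq hlam.ne']
  exact div_pos (by linarith) hlam

namespace IsOptimalPath

variable {E : Type*} [NormedAddCommGroup E] [InnerProductSpace ℝ E] {DF DFT : E → E} {c T lam : ℝ}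

theorem norm_sub_initial_le (hDF : ∀ X₁ X₂ : E, ‖DF X₁ - DF X₂‖ ≤ c * ‖X₁ - X₂‖)
    (hDFT : ∀ X₁ X₂ : E, ‖DFT X₁ - DFT X₂‖ ≤ c * ‖X₁ - X₂‖)
    (hDF0 : ‖DF 0‖ ≤ c) (hDFT0 : ‖DFT 0‖ ≤ c) (hlam : 0 < lam)
    (hlc : c * T * (1 + T) < lam) {X : E} {t : ℝ} (ht : 0 ≤ t) {Y : ℝ → E}
    (hY : IsOptimalPath DF DFT lam T X t Y) :
    ∀ s ∈ Icc t T,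
      ‖Y s - X‖ ≤ (s - t) * (c * (1 + T) * (1 + ‖X‖) / (lam - c * T * (T + 1))) := by
  have hsup : ∀ s ∈ Icc t T,
      ‖Y s‖ ≤ (‖Y t‖ + c * (1 + T) / lam * T) / (1 - c * (1 + T) / lam * T) :=
    norm_le_of_norm_deriv_le_sup hY.1 hY.2.2
      (fun M hM s hs => (norm_neg_one_div_smul_le hlam
        (norm_adjZ_le_s7 hDF hDFT hDF0 hDFT0 ht hM s hs)).trans_eq (by ring))
      (by linarith) (one_sub_div_mul_pos hlam hlc)
  rw [one_sub_div_mul_eq hlam.ne'] at hsup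
  have hspeed : ∀ s ∈ Icc t T, ‖-(1 / lam) • adjZ DF DFT T Y s‖
      ≤ c * (1 + T) * (1 + ‖X‖) / (lam - c * T * (T + 1)) := by
    intro s hs
    refine (norm_neg_one_div_smul_le hlam
      (norm_adjZ_le_s7 hDF hDFT hDF0 hDFT0 ht hsup s hs)).trans_eq ?_
    have hD : lam - c * T * (T + 1) ≠ 0 := by linarith
    rw [hY.2.1]
    field_simp
    ring
  intro s hs
  have hmvt := (convex_Icc t T).norm_image_sub_le_of_norm_hasDerivWithin_le hY.2.2 hspeed
    (left_mem_Icc.2 (hs.1.trans hs.2)) hs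
  rw [hY.2.1, Real.norm_of_nonneg (sub_nonneg.2 hs.1)] at hmvt
  linarith

theorem norm_sub_le_of_le_of_le (hDF : ∀ X₁ X₂ : E, ‖DF X₁ - DF X₂‖ ≤ c * ‖X₁ - X₂‖)
    (hDFT : ∀ X₁ X₂ : E, ‖DFT X₁ - DFT X₂‖ ≤ c * ‖X₁ - X₂‖) (hc : 0 ≤ c) (hlam : 0 < lam)
    (hlc : c * T * (1 + T) < lam) {X₁ X₂ : E} {t₁ t₂ τ : ℝ} {Y₁ Y₂ : ℝ → E}
    (hY₁ : IsOptimalPath DF DFT lam T X₁ t₁ Y₁) (hY₂ : IsOptimalPath DF DFT lam T X₂ t₂ Y₂)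
    (h₁ : t₁ ≤ τ) (h₂ : t₂ ≤ τ) (hτ : 0 ≤ τ) :
    ∀ s ∈ Icc τ T, ‖Y₁ s - Y₂ s‖ ≤ lam * ‖Y₁ τ - Y₂ τ‖ / (lam - c * T * (T + 1)) := by
  have hsub₁ : Icc τ T ⊆ Icc t₁ T := Icc_subset_Icc h₁ le_rfl
  have hsub₂ : Icc τ T ⊆ Icc t₂ T := Icc_subset_Icc h₂ le_rfl
  have hcont₁ := hY₁.1.mono hsub₁
  have hcont₂ := hY₂.1.mono hsub₂
  have hderiv : ∀ s ∈ Icc τ T, HasDerivWithinAt (fun u => Y₁ u - Y₂ u)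
      (-(1 / lam) • (adjZ DF DFT T Y₁ s - adjZ DF DFT T Y₂ s)) (Icc τ T) s := fun s hs => by
    rw [smul_sub]
    exact ((hY₁.2.2 s (hsub₁ hs)).mono hsub₁).sub ((hY₂.2.2 s (hsub₂ hs)).mono hsub₂)
  have hbound := norm_le_of_norm_deriv_le_sup (hcont₁.sub hcont₂) hderiv
    (fun M hM s hs => (norm_neg_one_div_smul_le hlam
      (norm_adjZ_sub_adjZ_le hDF hDFT hc hτ hcont₁ hcont₂ hM s hs)).trans_eq
        (by rw [add_zero]; ring))
    (by linarith) (one_sub_div_mul_pos hlam hlc)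
  intro s hs
  refine (hbound s hs).trans_eq ?_
  rw [one_sub_div_mul_eq hlam.ne', zero_mul, add_zero, div_div_eq_mul_div, Pi.sub_apply,
    mul_comm]

theorem norm_sub_at_max_le (hDF : ∀ X₁ X₂ : E, ‖DF X₁ - DF X₂‖ ≤ c * ‖X₁ - X₂‖)
    (hDFT : ∀ X₁ X₂ : E, ‖DFT X₁ - DFT X₂‖ ≤ c * ‖X₁ - X₂‖)
    (hDF0 : ‖DF 0‖ ≤ c) (hDFT0 : ‖DFT 0‖ ≤ c) (hlam : 0 < lam)
    (hlc : c * T * (1 + T) < lam) {X₁ X₂ : E} {t₁ t₂ : ℝ} (ht₁ : t₁ ∈ Icc 0 T)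
    (ht₂ : t₂ ∈ Icc 0 T) {Y₁ Y₂ : ℝ → E}
    (hY₁ : IsOptimalPath DF DFT lam T X₁ t₁ Y₁) (hY₂ : IsOptimalPath DF DFT lam T X₂ t₂ Y₂) :
    ‖Y₁ (max t₁ t₂) - Y₂ (max t₁ t₂)‖ ≤ ‖X₁ - X₂‖ +
      |t₂ - t₁| * (1 + T) * c * (1 + max ‖X₁‖ ‖X₂‖) / (lam - c * T * (T + 1)) := by
  wlog h : t₁ ≤ t₂ generalizing X₁ X₂ t₁ t₂ Y₁ Y₂
  · have := this ht₂ ht₁ hY₂ hY₁ (not_le.1 h).le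
    rwa [max_comm t₂, norm_sub_rev (Y₂ _), norm_sub_rev X₂, abs_sub_comm, max_comm ‖X₂‖] at this
  have hc : 0 ≤ c := (norm_nonneg _).trans hDF0
  have hD : 0 < lam - c * T * (T + 1) := by linarith
  rw [max_eq_right h, hY₂.2.1, abs_of_nonneg (sub_nonneg.2 h)]
  calc ‖Y₁ t₂ - X₂‖ ≤ ‖Y₁ t₂ - X₁‖ + ‖X₁ - X₂‖ := norm_sub_le_norm_sub_add_norm_sub _ _ _
    _ ≤ (t₂ - t₁) * (c * (1 + T) * (1 + ‖X₁‖) / (lam - c * T * (T + 1))) + ‖X₁ - X₂‖ := by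
        gcongr
        exact hY₁.norm_sub_initial_le hDF hDFT hDF0 hDFT0 hlam hlc ht₁.1 t₂ ⟨h, ht₂.2⟩
    _ ≤ (t₂ - t₁) * (c * (1 + T) * (1 + max ‖X₁‖ ‖X₂‖) / (lam - c * T * (T + 1))) +
        ‖X₁ - X₂‖ := by
        gcongr
        · exact mul_nonneg hc (by linarith [ht₂.1, ht₂.2])
        · exact le_max_left _ _
    _ = _ := by ring

end IsOptimalPath

theorem statement7_general
    (DF DFT : H → H) (c T lam : ℝ)
    (hDF : ∀ X₁ X₂ : H, ‖DF X₁ - DF X₂‖ ≤ c * ‖X₁ - X₂‖)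
    (hDFT : ∀ X₁ X₂ : H, ‖DFT X₁ - DFT X₂‖ ≤ c * ‖X₁ - X₂‖)
    (hDF0 : ‖DF 0‖ ≤ c) (hDFT0 : ‖DFT 0‖ ≤ c)
    (hlam : 0 < lam)
    (hlc : c * T * (1 + T) < lam)
    (X₁ X₂ : H) (t₁ t₂ : ℝ) (ht₁ : t₁ ∈ Icc 0 T) (ht₂ : t₂ ∈ Icc 0 T)
    (Y₁ Y₂ : ℝ → H)
    (hY₁ : IsOptimalPath DF DFT lam T X₁ t₁ Y₁)
    (hY₂ : IsOptimalPath DF DFT lam T X₂ t₂ Y₂) :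
    (∀ s ∈ Icc (max t₁ t₂) T,
      ‖Y₁ s - Y₂ s‖ ≤ lam / (lam - c * T * (T + 1)) *
        (‖X₁ - X₂‖ +
          |t₂ - t₁| * (1 + T) * c * (1 + max ‖X₁‖ ‖X₂‖) / (lam - c * T * (T + 1)))) ∧
    (t₁ = t₂ → ∀ s ∈ Icc t₁ T,
      ‖Y₁ s - Y₂ s‖ ≤ lam * ‖X₁ - X₂‖ / (lam - c * T * (T + 1))) := by
  have hc : 0 ≤ c := (norm_nonneg _).trans hDF0
  have hD : 0 < lam - c * T * (T + 1) := by linarith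
  have hstab := hY₁.norm_sub_le_of_le_of_le hDF hDFT hc hlam hlc hY₂ (le_max_left t₁ t₂)
    (le_max_right t₁ t₂) (ht₁.1.trans (le_max_left t₁ t₂))
  refine ⟨fun s hs => ?_, fun h s hs => ?_⟩
  · calc ‖Y₁ s - Y₂ s‖ ≤ lam * ‖Y₁ (max t₁ t₂) - Y₂ (max t₁ t₂)‖ / (lam - c * T * (T + 1)) :=
          hstab s hs
      _ ≤ _ := by
        rw [mul_div_right_comm]
        gcongr
        exact hY₁.norm_sub_at_max_le hDF hDFT hDF0 hDFT0 hlam hlc ht₁ ht₂ hY₂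
  · subst h
    simpa only [max_self, hY₁.2.1, hY₂.2.1] using hstab s (by rwa [max_self])

/-- Lipschitz dependence of the optimal trajectories on the initial data. -/
theorem statement7
    (F FT : H → ℝ) (DF DFT : H → H) (c T lam : ℝ)
    (hF : ∀ X, HasGradientAt F (DF X) X) (hFT : ∀ X, HasGradientAt FT (DFT X) X)
    (hDF : ∀ X₁ X₂ : H, ‖DF X₁ - DF X₂‖ ≤ c * ‖X₁ - X₂‖)
    (hDFT : ∀ X₁ X₂ : H, ‖DFT X₁ - DFT X₂‖ ≤ c * ‖X₁ - X₂‖)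
    (hDF0 : ‖DF 0‖ ≤ c) (hDFT0 : ‖DFT 0‖ ≤ c)
    (hT : 0 < T) (hlam : 0 < lam)
    (hlc : c * T * (1 + T) < lam)
    (X₁ X₂ : H) (t₁ t₂ : ℝ) (ht₁ : t₁ ∈ Icc 0 T) (ht₂ : t₂ ∈ Icc 0 T)
    (Y₁ Y₂ : ℝ → H)
    (hY₁ : IsOptimalPath DF DFT lam T X₁ t₁ Y₁)
    (hY₂ : IsOptimalPath DF DFT lam T X₂ t₂ Y₂) :
    (∀ s ∈ Icc (max t₁ t₂) T,
      ‖Y₁ s - Y₂ s‖ ≤ lam / (lam - c * T * (T + 1)) *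
        (‖X₁ - X₂‖ +
          |t₂ - t₁| * (1 + T) * c * (1 + max ‖X₁‖ ‖X₂‖) / (lam - c * T * (T + 1)))) ∧
    (t₁ = t₂ → ∀ s ∈ Icc t₁ T,
      ‖Y₁ s - Y₂ s‖ ≤ lam * ‖X₁ - X₂‖ / (lam - c * T * (T + 1))) :=
  statement7_general DF DFT c T lam hDF hDFT hDF0 hDFT0 hlam hlc X₁ X₂ t₁ t₂ ht₁ ht₂ Y₁ Y₂ hY₁ hY₂
end

section
/- Assume λ > cT(1+T). For initial data (X₁,t) and (X₂,t) in H×[0,T], the adjoint trajectories satisfy sup_{t≤s≤T} ||Z_{X₁t}(s) − Z_{X₂t}(s)|| ≤ c(T+1) λ ||X₁−X₂|| / (λ − cT(T+1)). -/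
open MeasureTheory Set
open scoped RealInnerProductSpace

variable {H : Type*} [NormedAddCommGroup H] [InnerProductSpace ℝ H] [CompleteSpace H]

/-! The difference `Y₁ - Y₂` of two optimal paths has derivative `-(Z₁ - Z₂)/λ`, and
`Z₁ - Z₂` is controlled by `c (1 + T) M`, where `M` is the maximum of `‖Y₁ - Y₂‖` on `[t, T]`.
The mean value inequality then gives `M ≤ ‖X₁ - X₂‖ + c T (1 + T) M / λ`, which can be solved
for `M` because `λ > c T (1 + T)`. -/

omit [CompleteSpace H] in
theorem norm_adjZ_sub_le {DF DFT : H → H} {c : ℝ} (hc : 0 ≤ c)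
    (hDF : ∀ X₁ X₂ : H, ‖DF X₁ - DF X₂‖ ≤ c * ‖X₁ - X₂‖)
    (hDFT : ∀ X₁ X₂ : H, ‖DFT X₁ - DFT X₂‖ ≤ c * ‖X₁ - X₂‖)
    {T s M : ℝ} (hsT : s ≤ T) {Y₁ Y₂ : ℝ → H}
    (hY₁ : ContinuousOn Y₁ (Icc s T)) (hY₂ : ContinuousOn Y₂ (Icc s T))
    (hM : ∀ σ ∈ Icc s T, ‖Y₁ σ - Y₂ σ‖ ≤ M) :
    ‖adjZ DF DFT T Y₁ s - adjZ DF DFT T Y₂ s‖ ≤ c * (1 + (T - s)) * M := by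
  have hDFcont : Continuous DF :=
    (LipschitzWith.of_dist_le' (by simpa only [dist_eq_norm] using hDF)).continuous
  have hint : ∀ {Y : ℝ → H}, ContinuousOn Y (Icc s T) →
      IntervalIntegrable (fun σ => DF (Y σ)) volume s T := fun hY =>
    (hDFcont.comp_continuousOn (uIcc_of_le hsT ▸ hY)).intervalIntegrable
  have hDF_le : ∀ σ ∈ uIoc s T, ‖DF (Y₁ σ) - DF (Y₂ σ)‖ ≤ c * M := fun σ hσ => by
    rw [uIoc_of_le hsT] at hσ
    exact (hDF _ _).trans (by gcongr; exact hM σ (Ioc_subset_Icc_self hσ))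
  have hDFT_le : ‖DFT (Y₁ T) - DFT (Y₂ T)‖ ≤ c * M :=
    (hDFT _ _).trans (by gcongr; exact hM T (right_mem_Icc.2 hsT))
  calc ‖adjZ DF DFT T Y₁ s - adjZ DF DFT T Y₂ s‖
      = ‖(DFT (Y₁ T) - DFT (Y₂ T)) + ∫ σ in s..T, (DF (Y₁ σ) - DF (Y₂ σ))‖ := by
        rw [adjZ, adjZ, intervalIntegral.integral_sub (hint hY₁) (hint hY₂), add_sub_add_comm]
    _ ≤ ‖DFT (Y₁ T) - DFT (Y₂ T)‖ + ‖∫ σ in s..T, (DF (Y₁ σ) - DF (Y₂ σ))‖ := norm_add_le _ _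
    _ ≤ c * M + c * M * |T - s| :=
        add_le_add hDFT_le (intervalIntegral.norm_integral_le_of_norm_le_const hDF_le)
    _ = c * (1 + (T - s)) * M := by rw [abs_of_nonneg (sub_nonneg.2 hsT)]; ring

omit [CompleteSpace H] in
theorem IsOptimalPath.norm_sub_le {DF DFT : H → H} {lam T t B : ℝ} {X₁ X₂ : H} {Y₁ Y₂ : ℝ → H}
    (h₁ : IsOptimalPath DF DFT lam T X₁ t Y₁) (h₂ : IsOptimalPath DF DFT lam T X₂ t Y₂)
    (hB : ∀ s ∈ Icc t T, ‖adjZ DF DFT T Y₁ s - adjZ DF DFT T Y₂ s‖ ≤ B) :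
    ∀ s ∈ Icc t T, ‖Y₁ s - Y₂ s‖ ≤ ‖X₁ - X₂‖ + B / |lam| * (s - t) := by
  have hderiv : ∀ s ∈ Icc t T, HasDerivWithinAt (Y₁ - Y₂)
      (-(1 / lam) • (adjZ DF DFT T Y₁ s - adjZ DF DFT T Y₂ s)) (Icc t T) s := fun s hs => by
    simpa only [smul_sub] using (h₁.2.2 s hs).sub (h₂.2.2 s hs)
  have hbound : ∀ s ∈ Ico t T,
      ‖-(1 / lam) • (adjZ DF DFT T Y₁ s - adjZ DF DFT T Y₂ s)‖ ≤ B / |lam| := fun s hs => by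
    rw [norm_smul, norm_neg, norm_div, norm_one, Real.norm_eq_abs, one_div_mul_eq_div]
    gcongr
    exact hB s (Ico_subset_Icc_self hs)
  intro s hs
  have hmvt := norm_image_sub_le_of_norm_deriv_le_segment' hderiv hbound s hs
  rw [Pi.sub_apply, Pi.sub_apply, h₁.2.1, h₂.2.1] at hmvt
  calc ‖Y₁ s - Y₂ s‖ ≤ ‖X₁ - X₂‖ + ‖Y₁ s - Y₂ s - (X₁ - X₂)‖ := norm_le_insert' _ _
    _ ≤ ‖X₁ - X₂‖ + B / |lam| * (s - t) := by gcongr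

theorem statement8_general
    (DF DFT : H → H) (c T lam : ℝ)
    (hDF : ∀ X₁ X₂ : H, ‖DF X₁ - DF X₂‖ ≤ c * ‖X₁ - X₂‖)
    (hDFT : ∀ X₁ X₂ : H, ‖DFT X₁ - DFT X₂‖ ≤ c * ‖X₁ - X₂‖)
    (hDF0 : ‖DF 0‖ ≤ c)
    (hlam : 0 < lam)
    (hlc : c * T * (1 + T) < lam)
    (X₁ X₂ : H) (t : ℝ) (ht : t ∈ Icc 0 T)
    (Y₁ Y₂ : ℝ → H)
    (hY₁ : IsOptimalPath DF DFT lam T X₁ t Y₁)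
    (hY₂ : IsOptimalPath DF DFT lam T X₂ t Y₂) :
    ∀ s ∈ Icc t T,
      ‖adjZ DF DFT T Y₁ s - adjZ DF DFT T Y₂ s‖ ≤
        c * (T + 1) * lam * ‖X₁ - X₂‖ / (lam - c * T * (T + 1)) := by
  have hc : 0 ≤ c := (norm_nonneg _).trans hDF0
  obtain ⟨ht0, htT⟩ := ht
  have hT : 0 ≤ T := ht0.trans htT
  obtain ⟨s₀, hs₀, hmax⟩ := isCompact_Icc.exists_isMaxOn (nonempty_Icc.2 htT)
    (hY₁.1.sub hY₂.1).norm
  set M := ‖Y₁ s₀ - Y₂ s₀‖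
  have hM0 : 0 ≤ M := norm_nonneg _
  have hYM : ∀ σ ∈ Icc t T, ‖Y₁ σ - Y₂ σ‖ ≤ M := fun σ hσ => hmax hσ
  have hZ : ∀ s ∈ Icc t T, ‖adjZ DF DFT T Y₁ s - adjZ DF DFT T Y₂ s‖ ≤ c * (1 + T) * M := by
    intro s hs
    have hsub : Icc s T ⊆ Icc t T := Icc_subset_Icc_left hs.1
    calc ‖adjZ DF DFT T Y₁ s - adjZ DF DFT T Y₂ s‖ ≤ c * (1 + (T - s)) * M :=
          norm_adjZ_sub_le hc hDF hDFT hs.2 (hY₁.1.mono hsub) (hY₂.1.mono hsub)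
            fun σ hσ => hYM σ (hsub hσ)
      _ ≤ c * (1 + T) * M := by gcongr; linarith [hs.1]
  have hM : M ≤ ‖X₁ - X₂‖ + c * (1 + T) * M / lam * T :=
    (hY₁.norm_sub_le hY₂ hZ s₀ hs₀).trans
      (by rw [abs_of_pos hlam]; gcongr; linarith [hs₀.2])
  have hden : 0 < lam - c * T * (T + 1) := by linarith
  have hM' : M ≤ lam * ‖X₁ - X₂‖ / (lam - c * T * (T + 1)) := by
    have hlamM : lam * (c * (1 + T) * M / lam * T) = c * T * (T + 1) * M := by
      field_simp
      ring
    rw [le_div_iff₀ hden]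
    linarith [mul_le_mul_of_nonneg_left hM hlam.le]
  intro s hs
  calc ‖adjZ DF DFT T Y₁ s - adjZ DF DFT T Y₂ s‖ ≤ c * (1 + T) * M := hZ s hs
    _ ≤ c * (1 + T) * (lam * ‖X₁ - X₂‖ / (lam - c * T * (T + 1))) := by gcongr
    _ = c * (T + 1) * lam * ‖X₁ - X₂‖ / (lam - c * T * (T + 1)) := by ring

/-- Lipschitz dependence of the adjoint trajectories on the initial state. -/
theorem statement8
    (F FT : H → ℝ) (DF DFT : H → H) (c T lam : ℝ)
    (hF : ∀ X, HasGradientAt F (DF X) X) (hFT : ∀ X, HasGradientAt FT (DFT X) X)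
    (hDF : ∀ X₁ X₂ : H, ‖DF X₁ - DF X₂‖ ≤ c * ‖X₁ - X₂‖)
    (hDFT : ∀ X₁ X₂ : H, ‖DFT X₁ - DFT X₂‖ ≤ c * ‖X₁ - X₂‖)
    (hDF0 : ‖DF 0‖ ≤ c) (hDFT0 : ‖DFT 0‖ ≤ c)
    (hT : 0 < T) (hlam : 0 < lam)
    (hlc : c * T * (1 + T) < lam)
    (X₁ X₂ : H) (t : ℝ) (ht : t ∈ Icc 0 T)
    (Y₁ Y₂ : ℝ → H)
    (hY₁ : IsOptimalPath DF DFT lam T X₁ t Y₁)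
    (hY₂ : IsOptimalPath DF DFT lam T X₂ t Y₂) :
    ∀ s ∈ Icc t T,
      ‖adjZ DF DFT T Y₁ s - adjZ DF DFT T Y₂ s‖ ≤
        c * (T + 1) * lam * ‖X₁ - X₂‖ / (lam - c * T * (T + 1)) :=
  statement8_general DF DFT c T lam hDF hDFT hDF0 hlam hlc X₁ X₂ t ht Y₁ Y₂ hY₁ hY₂
end
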